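/- arXiv:math/0409535 — 3 statements merged into one kernel-verified Lean document; each statement's English description precedes it below -/
import Mathlib

section
/- Let K be a field with discrete valuation v, n a positive integer, and c_0,…,c_{n-1} ∈ K with v(c_b) ≥ 0 for all b. Define g(0,b) = 1 for 0 ≤ b ≤ n, g(1,b) = c_b for 0 ≤ b ≤ n-1, and g(a,b) = (g(a-1,b)·g(a-1,b+1) - 1)/g(a-2,b+1) for 2 ≤ a ≤ n, 0 ≤ b ≤ n-a, assuming all denominators are nonzero. Then v(g(a,b)) ≥ 0 for all (a,b) in the domain. -/
/-- Continuant / frieze determinant polynomial. -/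
def friezeD {K : Type*} [Field K] (c : ℕ → K) : ℕ → ℕ → K
  | 0, _ => 1
  | 1, b => c b
  | (a+2), b => c (b+a+1) * friezeD c (a+1) b - friezeD c a b

lemma friezeD_euler {K : Type*} [Field K] (c : ℕ → K) :
    ∀ a b, friezeD c (a+2) b * friezeD c a (b+1)
      = friezeD c (a+1) b * friezeD c (a+1) (b+1) - 1 := by
  intro a
  induction a with
  | zero => intro b; simp [friezeD]; ring
  | succ a ih =>
    intro b
    have h1 : friezeD c (a+3) b = c (b+a+2) * friezeD c (a+2) b - friezeD c (a+1) b := rfl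
    have h2 : friezeD c (a+2) (b+1)
        = c (b+a+2) * friezeD c (a+1) (b+1) - friezeD c a (b+1) := by
      show c ((b+1)+a+1) * _ - _ = _
      ring_nf
    have := ih b
    show friezeD c (a+3) b * friezeD c (a+1) (b+1) = _
    rw [h1, h2]
    linear_combination ih b

theorem stmt_13 {K : Type*} [Field K] (v : AddValuation K (WithTop ℤ))
    (n : ℕ) (hn : 0 < n) (c : ℕ → K) (hc : ∀ b < n, 0 ≤ v (c b))
    (g : ℕ → ℕ → K)
    (h0 : ∀ b ≤ n, g 0 b = 1)
    (h1 : ∀ b ≤ n - 1, g 1 b = c b)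
    (hrec : ∀ a b, 2 ≤ a → a ≤ n → b ≤ n - a →
        g (a-2) (b+1) ≠ 0 ∧
        g a b = (g (a-1) b * g (a-1) (b+1) - 1) / g (a-2) (b+1)) :
    ∀ a b, a ≤ n → b ≤ n - a → 0 ≤ v (g a b) := by
  -- g agrees with friezeD
  have hg : ∀ a b, a ≤ n → b ≤ n - a → g a b = friezeD c a b := by
    intro a
    induction a using Nat.strong_induction_on with
    | _ a ih =>
      match a with
      | 0 => intro b _ hb; rw [h0 b (by omega)]; rfl
      | 1 => intro b _ hb; rw [h1 b hb]; rfl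
      | (a+2) =>
        intro b han hb
        obtain ⟨hne, heq⟩ := hrec (a+2) b (by omega) han hb
        have e1 : g (a+1) b = friezeD c (a+1) b := ih (a+1) (by omega) b (by omega) (by omega)
        have e2 : g (a+1) (b+1) = friezeD c (a+1) (b+1) :=
          ih (a+1) (by omega) (b+1) (by omega) (by omega)
        have e3 : g a (b+1) = friezeD c a (b+1) := ih a (by omega) (b+1) (by omega) (by omega)
        simp only [Nat.add_sub_cancel, show a+2-1 = a+1 from rfl] at heq hne
        rw [heq, e1, e2, e3]
        rw [e3] at hne
        rw [div_eq_iff hne, friezeD_euler]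
  intro a b han hb
  rw [hg a b han hb]
  clear hg hrec h0 h1 g
  induction a using Nat.strong_induction_on generalizing b with
  | _ a ih =>
    match a with
    | 0 => simp [friezeD]
    | 1 =>
      show 0 ≤ v (c b)
      exact hc b (by omega)
    | (a+2) =>
      show 0 ≤ v (c (b+a+1) * friezeD c (a+1) b - friezeD c a b)
      have h1 : 0 ≤ v (c (b+a+1) * friezeD c (a+1) b) := by
        rw [v.map_mul]
        have := hc (b+a+1) (by omega)
        have := ih (a+1) (by omega) b (by omega) (by omega)
        positivity
      have h2 : 0 ≤ v (friezeD c a b) := ih a (by omega) b (by omega) (by omega)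
      calc (0 : WithTop ℤ) ≤ min (v (c (b+a+1) * friezeD c (a+1) b)) (v (friezeD c a b)) :=
            le_min h1 h2
        _ ≤ _ := v.map_sub _ _
end

section
/- Let c_0,…,c_{n-1} be elements of a commutative ring R. Let M(a,b) denote the a×a tridiagonal matrix with diagonal entries c_b,…,c_{b+a-1} and 1's on the sub- and superdiagonals. Then the determinants D(a,b) = det M(a,b) satisfy D(a,b)·D(a-2,b+1) = D(a-1,b)·D(a-1,b+1) - 1 for all 2 ≤ a ≤ n and 0 ≤ b ≤ n - a. -/
section
variable {R : Type*} [CommRing R] (c : ℕ → R)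

private def T (c : ℕ → R) (a b : ℕ) : Matrix (Fin a) (Fin a) R :=
  Matrix.of fun i j : Fin a =>
    if (i : ℕ) = j then c (b + i)
    else if (i : ℕ) = j + 1 ∨ (j : ℕ) = i + 1 then 1 else 0

private lemma T_zero (b : ℕ) : (T c 0 b).det = 1 := by
  simp [Matrix.det_fin_zero]

private lemma T_one (b : ℕ) : (T c 1 b).det = c b := by
  simp [T, Matrix.det_fin_one]

private lemma T_rec (a b : ℕ) :
    (T c (a+2) b).det = c b * (T c (a+1) (b+1)).det - (T c a (b+2)).det := by
  rw [Matrix.det_succ_row_zero, Fin.sum_univ_succ, Fin.sum_univ_succ]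
  have hz : ∀ j : Fin a, T c (a+2) b 0 j.succ.succ = 0 := by
    intro j; simp [T, Fin.succ]
  simp only [hz, mul_zero, zero_mul, Finset.sum_const_zero, add_zero]
  have h0 : T c (a+2) b 0 0 = c b := by simp [T]
  have h1 : T c (a+2) b 0 (Fin.succ 0) = 1 := by simp [T, Fin.succ]
  rw [h0, h1]
  have hA : (T c (a+2) b).submatrix Fin.succ ((0 : Fin (a+2)).succAbove)
      = T c (a+1) (b+1) := by
    ext i j
    simp only [Fin.succAbove_zero, Matrix.submatrix_apply, T, Matrix.of_apply,
      Fin.val_succ]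
    split_ifs <;> first | rfl | omega | (congr 1; omega)
  rw [hA]
  -- second term
  set N := (T c (a+2) b).submatrix Fin.succ ((Fin.succ 0 : Fin (a+2)).succAbove) with hN
  have hdetN : N.det = (T c a (b+2)).det := by
    rw [Matrix.det_succ_column_zero, Fin.sum_univ_succ]
    have hcol : ((Fin.succ 0 : Fin (a+2)).succAbove 0) = 0 := by
      ext; simp [Fin.succAbove, Fin.lt_def]
    have hz2 : ∀ i : Fin a, N i.succ 0 = 0 := by
      intro i
      rw [hN, Matrix.submatrix_apply, hcol]
      simp [T, Fin.val_succ]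
    simp only [hz2, mul_zero, zero_mul, Finset.sum_const_zero, add_zero]
    have hN00 : N 0 0 = 1 := by
      rw [hN, Matrix.submatrix_apply, hcol]
      simp [T, Fin.val_succ]
    rw [hN00]
    have hB : N.submatrix ((0 : Fin (a+1)).succAbove) Fin.succ = T c a (b+2) := by
      ext i j
      simp only [Fin.succAbove_zero, Matrix.submatrix_apply, hN, T, Matrix.of_apply,
        Fin.val_succ, Fin.succAbove, Fin.castSucc, Fin.castAdd, Fin.castLE, Fin.lt_def,
        Fin.succ]
      split_ifs <;> first | rfl | omega | (congr 1; omega) | simp_all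
    rw [hB]
    norm_num
  rw [hdetN]
  norm_num [Fin.val_succ]
  ring

private lemma key (a : ℕ) : ∀ b, (T c (a+2) b).det * (T c a (b+1)).det
    = (T c (a+1) b).det * (T c (a+1) (b+1)).det - 1 := by
  induction a with
  | zero =>
    intro b
    rw [T_rec c 0 b, T_zero, T_zero,
      show (T c (0+1) (b+1)).det = c (b+1) from T_one c (b+1),
      show (T c (0+1) b).det = c b from T_one c b]
    ring
  | succ a ih =>
    intro b
    have h1 := T_rec c (a+1) b
    have h2 := T_rec c a b
    have h3 := ih (b+1)
    linear_combination (T c (a+1) (b+1)).det * h1 - (T c (a+2) (b+1)).det * h2 + h3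

end

theorem stmt_14 {R : Type*} [CommRing R] (n : ℕ) (c : ℕ → R)
    (D : ℕ → ℕ → R)
    (hD : ∀ a b, D a b = (Matrix.of fun i j : Fin a =>
        if (i : ℕ) = j then c (b + i)
        else if (i : ℕ) = j + 1 ∨ (j : ℕ) = i + 1 then 1 else 0).det) :
    ∀ a b, 2 ≤ a → a ≤ n → b ≤ n - a →
      D a b * D (a-2) (b+1) = D (a-1) b * D (a-1) (b+1) - 1 := by
  intro a b ha _ _
  obtain ⟨k, rfl⟩ : ∃ k, a = k + 2 := ⟨a - 2, by omega⟩
  have hD' : ∀ a b, D a b = (T c a b).det := hD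
  simp only [hD', Nat.add_sub_cancel, show k + 2 - 1 = k + 1 by omega]
  exact key c k b
end

section
/- Let K be a field with discrete valuation v and let n ≥ 1, c_0,…,c_{n-1} ∈ K with v(c_b) ≥ 0, defining the number frieze recurrence with solution g (assumed to exist, i.e. all g(a,b) with a ≤ n-2 are nonzero where used as denominators). Then for any positive integer N and any N-perturbation g' of this recurrence and any (a,b) ∈ S with projected precision loss r_{(a,b)}(g') < N, one has v(g'(a,b) - g(a,b)) ≥ N - r_{(a,b)}(g'), and in particular v(g'(a,b)) ≥ 0. -/
/-!
For the exact frieze, the frieze relation implies the linear (continuant) recurrence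
`g (k+2) b = c b * g (k+1) (b+1) - g k (b+2)`, so `g` is integral. For the perturbed frieze the
defect `D k` of this recurrence satisfies `v (D 0) ≥ N`, and the Casoratian
`g' (k+1) (b+1) * D (k+1) - g' (k+2) (b+1) * D k` is a difference of two defects of the frieze
relation, hence of valuation `≥ N`. Dividing by `g' (k+1) (b+1)` costs at most `r`, and the
losses do not accumulate: two vertically adjacent entries of the exact frieze are never both
non-units, because the frieze relation would then read `0 ≡ -1`. This gives `v (D k) ≥ N - r`,
and `g' (k+2) b - g (k+2) b = D k + c b * (g' - g) (k+1) (b+1) - (g' - g) k (b+2)` closes an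
induction on the row over the cone of `(a, b)`.
-/

namespace AddValuation

section Monoid

variable {R Γ₀ : Type*} [Ring R] [LinearOrderedAddCommMonoidWithTop Γ₀] (v : AddValuation R Γ₀)

theorem map_one_add_of_pos {x : R} (hx : 0 < v x) : v (1 + x) = 0 := by
  rw [v.map_add_eq_of_lt_left (by rwa [map_one]), map_one]

theorem le_map_mul_of_nonneg_left {x y : R} {t : Γ₀} (hx : 0 ≤ v x) (hy : t ≤ v y) :
    t ≤ v (x * y) := by
  rw [map_mul]
  exact le_add_of_nonneg_of_le hx hy

theorem map_mul_pos_of_nonneg_of_pos {x y : R} (hx : 0 ≤ v x) (hy : 0 < v y) :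
    0 < v (x * y) := by
  rw [map_mul]
  exact hy.trans_le (le_add_of_nonneg_left hx)

theorem map_nonneg_of_le_map_sub {x y : R} {t : Γ₀} (hx : 0 ≤ v x) (ht : 0 ≤ t)
    (hxy : t ≤ v (y - x)) : 0 ≤ v y := by
  simpa using v.map_le_add hx (ht.trans hxy)

end Monoid

section Casoratian

variable {R : Type*} [CommRing R] (v : AddValuation R (WithTop ℤ))

theorem le_map_of_le_map_mul_sub_mul {z z' D D' : R} {t s N : WithTop ℤ} (hz : v z ≠ ⊤)
    (hN : N ≤ v (z * D' - z' * D)) (hD : t + v z ≤ v D) (hs : s ≤ v z')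
    (hsum : t + v z + s ≤ N) : t + s ≤ v D' := by
  have h : v z + (t + s) ≤ v z + v D' := by
    rw [← v.map_mul, ← sub_add_cancel (z * D') (z' * D)]
    refine v.map_le_add ?_ ?_
    · calc v z + (t + s) = t + v z + s := by ac_rfl
        _ ≤ _ := hsum.trans hN
    · calc v z + (t + s) = s + (t + v z) := by ac_rfl
        _ ≤ v z' + v D := add_le_add hs hD
        _ = v (z' * D) := (v.map_mul _ _).symm
  exact (WithTop.add_le_add_iff_left hz).mp h

theorem le_map_of_le_map_casoratian {z D : ℕ → R} {t r N : WithTop ℤ} {k : ℕ} (hr0 : 0 ≤ r)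
    (hr : r ≠ ⊤) (htr : t + r ≤ N) (hD₀ : N ≤ v (D 0))
    (hcas : ∀ m < k, N ≤ v (z m * D (m + 1) - z (m + 1) * D m))
    (hz : ∀ m < k, v (z m) ≤ r) (hpair : ∀ m, m + 1 < k → v (z m) + v (z (m + 1)) ≤ r)
    (hzk : 0 ≤ v (z k)) : t ≤ v (D k) := by
  have hfin : ∀ m < k, v (z m) ≠ ⊤ := fun m hm => ne_top_of_le_ne_top hr (hz m hm)
  have hchain : ∀ m < k, t + v (z m) ≤ v (D m) := by
    intro m
    induction m with
    | zero => exact fun hk => (add_le_add le_rfl (hz 0 hk)).trans (htr.trans hD₀)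
    | succ m ih =>
      intro hm
      refine v.le_map_of_le_map_mul_sub_mul (hfin m (by omega)) (hcas m (by omega))
        (ih (by omega)) le_rfl ?_
      rw [add_assoc]
      exact (add_le_add le_rfl (hpair m hm)).trans htr
  cases k with
  | zero => exact (le_add_of_nonneg_right hr0).trans (htr.trans hD₀)
  | succ j =>
    simpa using v.le_map_of_le_map_mul_sub_mul (hfin j (by omega)) (hcas j (by omega))
      (hchain j (by omega)) hzk (by simpa using (add_le_add le_rfl (hz j (by omega))).trans htr)

end Casoratian

end AddValuation

section Defects

variable {R : Type*} [CommRing R]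

def friezeDefect (g : ℕ → ℕ → R) (k b : ℕ) : R :=
  g (k + 2) b * g k (b + 1) - g (k + 1) b * g (k + 1) (b + 1) + 1

def continuantDefect (c : ℕ → R) (g : ℕ → ℕ → R) (b k : ℕ) : R :=
  g (k + 2) b - c b * g (k + 1) (b + 1) + g k (b + 2)

theorem casoratian_continuantDefect (c : ℕ → R) (g : ℕ → ℕ → R) (b k : ℕ) :
    g (k + 1) (b + 1) * continuantDefect c g b (k + 1) -
        g (k + 2) (b + 1) * continuantDefect c g b k =
      friezeDefect g (k + 1) b - friezeDefect g k (b + 1) := by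
  unfold continuantDefect friezeDefect
  ring

end Defects

section Frieze

variable {K : Type*} [Field K]

structure IsFrieze (n : ℕ) (c : ℕ → K) (g : ℕ → ℕ → K) : Prop where
  zero : ∀ b ≤ n, g 0 b = 1
  one : ∀ b ≤ n - 1, g 1 b = c b
  relation : ∀ a b, 2 ≤ a → a ≤ n → b ≤ n - a →
    g (a - 2) (b + 1) ≠ 0 ∧ g a b = (g (a - 1) b * g (a - 1) (b + 1) - 1) / g (a - 2) (b + 1)

namespace IsFrieze

variable {n : ℕ} {c : ℕ → K} {g : ℕ → ℕ → K}

theorem ne_zero (hF : IsFrieze n c g) {k b : ℕ} (hk : k + 2 ≤ n) (hb : b ≤ n - (k + 2)) :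
    g k (b + 1) ≠ 0 :=
  (hF.relation (k + 2) b (by omega) hk hb).1

theorem friezeDefect_eq_zero (hF : IsFrieze n c g) {k b : ℕ} (hk : k + 2 ≤ n)
    (hb : b ≤ n - (k + 2)) : friezeDefect g k b = 0 := by
  have heq : g (k + 2) b = (g (k + 1) b * g (k + 1) (b + 1) - 1) / g k (b + 1) :=
    (hF.relation (k + 2) b (by omega) hk hb).2
  rw [friezeDefect, heq, div_mul_cancel₀ _ (hF.ne_zero hk hb)]
  ring

theorem continuantDefect_eq_zero (hF : IsFrieze n c g) {b : ℕ} :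
    ∀ k, k + 2 ≤ n → b ≤ n - (k + 2) → continuantDefect c g b k = 0
  | 0, hk, hb => by
    have h := hF.friezeDefect_eq_zero (k := 0) hk hb
    simp only [friezeDefect, continuantDefect, zero_add, hF.zero (b + 1) (by omega),
      hF.zero (b + 2) (by omega), hF.one b (by omega), hF.one (b + 1) (by omega)] at h ⊢
    linear_combination h
  | k + 1, hk, hb => by
    have hcas := casoratian_continuantDefect c g b k
    rw [hF.continuantDefect_eq_zero k (by omega) (by omega), hF.friezeDefect_eq_zero hk hb,
      hF.friezeDefect_eq_zero (k := k) (b := b + 1) (by omega) (by omega)] at hcas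
    simpa [hF.ne_zero (k := k + 1) (b := b) hk hb] using hcas

theorem continuant (hF : IsFrieze n c g) {k b : ℕ} (hk : k + 2 ≤ n) (hb : b ≤ n - (k + 2)) :
    g (k + 2) b = c b * g (k + 1) (b + 1) - g k (b + 2) := by
  have h := hF.continuantDefect_eq_zero k hk hb
  unfold continuantDefect at h
  linear_combination h

variable {Γ₀ : Type*} [LinearOrderedAddCommMonoidWithTop Γ₀] (v : AddValuation K Γ₀)

theorem valuation_nonneg (hF : IsFrieze n c g) (hc : ∀ b < n, 0 ≤ v (c b)) :
    ∀ a b, a ≤ n → b ≤ n - a → 0 ≤ v (g a b)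
  | 0, b, _, hb => by simp [hF.zero b hb]
  | 1, b, ha, hb => by simpa [hF.one b hb] using hc b (by omega)
  | k + 2, b, ha, hb => by
    rw [hF.continuant ha hb]
    exact v.map_le_sub
      (v.le_map_mul_of_nonneg_left (hc b (by omega))
        (hF.valuation_nonneg hc (k + 1) (b + 1) (by omega) (by omega)))
      (hF.valuation_nonneg hc k (b + 2) (by omega) (by omega))

theorem valuation_eq_zero_or (hF : IsFrieze n c g) (hc : ∀ b < n, 0 ≤ v (c b)) {k b : ℕ}
    (hk : k + 2 ≤ n) (hb : b ≤ n - (k + 2)) :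
    v (g k (b + 1)) = 0 ∨ v (g (k + 1) (b + 1)) = 0 := by
  by_contra h
  obtain ⟨h₁, h₂⟩ := not_or.mp h
  have hg := hF.valuation_nonneg v hc
  have hone : (1 : K) = g (k + 1) b * g (k + 1) (b + 1) + -(g (k + 2) b * g k (b + 1)) := by
    have h := hF.friezeDefect_eq_zero hk hb
    unfold friezeDefect at h
    linear_combination h
  have : (0 : Γ₀) < v 1 := by
    rw [hone]
    refine v.map_lt_add (v.map_mul_pos_of_nonneg_of_pos (hg _ _ (by omega) (by omega))
      ((hg _ _ (by omega) (by omega)).lt_of_ne' h₂)) ?_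
    rw [v.map_neg]
    exact v.map_mul_pos_of_nonneg_of_pos (hg _ _ (by omega) (by omega))
      ((hg _ _ (by omega) (by omega)).lt_of_ne' h₁)
  simp at this

end IsFrieze

structure IsPerturbation (v : AddValuation K (WithTop ℤ)) (n N : ℕ) (g g' : ℕ → ℕ → K) :
    Prop where
  init : ∀ a b, a ≤ 1 → a ≤ n → b ≤ n - a →
    ∃ ε : K, (N : WithTop ℤ) ≤ v ε ∧ g' a b = g a b * (1 + ε)
  relation : ∀ a b, 2 ≤ a → a ≤ n → b ≤ n - a →
    ∃ ε₁ ε₂ ε₃ : K,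
      (N : WithTop ℤ) ≤ v ε₁ ∧ (N : WithTop ℤ) ≤ v ε₂ ∧ (N : WithTop ℤ) ≤ v ε₃ ∧
      (1 + ε₃) * g' (a - 2) (b + 1) ≠ 0 ∧
      g' a b = ((1 + ε₁) * g' (a - 1) b * g' (a - 1) (b + 1) - (1 + ε₂)) /
        ((1 + ε₃) * g' (a - 2) (b + 1))

/-- `PrecisionLossLE v g' a b r` says that the projected precision loss `r_{(a,b)}(g')` is at
most `r`. -/
def PrecisionLossLE (v : AddValuation K (WithTop ℤ)) (g' : ℕ → ℕ → K) (a b : ℕ)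
    (r : WithTop ℤ) : Prop :=
  ∀ a' b', ((a' = a ∧ b' = b) ∨ (a' < a ∧ b ≤ b' ∧ b' ≤ b + (a - a'))) →
    2 ≤ a' → v (g' (a' - 2) (b' + 1)) ≤ r

theorem PrecisionLossLE.mono {v : AddValuation K (WithTop ℤ)} {g' : ℕ → ℕ → K}
    {a b a' b' : ℕ} {r : WithTop ℤ} (h : PrecisionLossLE v g' a b r) (ha : a' < a)
    (hb : b ≤ b') (hb' : b' ≤ b + (a - a')) : PrecisionLossLE v g' a' b' r :=
  fun a'' b'' hcone ha'' => h a'' b'' (by omega) ha''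

namespace IsPerturbation

variable {v : AddValuation K (WithTop ℤ)} {n N : ℕ} {c : ℕ → K} {g g' : ℕ → ℕ → K}

theorem le_map_sub_of_le_one (hP : IsPerturbation v n N g g') (hF : IsFrieze n c g)
    (hc : ∀ b < n, 0 ≤ v (c b)) {a b : ℕ} (ha1 : a ≤ 1) (ha : a ≤ n) (hb : b ≤ n - a) :
    (N : WithTop ℤ) ≤ v (g' a b - g a b) := by
  obtain ⟨ε, hε, heq⟩ := hP.init a b ha1 ha hb
  rw [heq, show g a b * (1 + ε) - g a b = g a b * ε by ring]
  exact v.le_map_mul_of_nonneg_left (hF.valuation_nonneg v hc a b ha hb) hε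

theorem le_map_friezeDefect (hP : IsPerturbation v n N g g') (hN : (0 : WithTop ℤ) < N)
    {k b : ℕ} (hk : k + 2 ≤ n) (hb : b ≤ n - (k + 2)) (hx : 0 ≤ v (g' (k + 1) b))
    (hy : 0 ≤ v (g' (k + 1) (b + 1))) : (N : WithTop ℤ) ≤ v (friezeDefect g' k b) := by
  obtain ⟨ε₁, ε₂, ε₃, hε₁, hε₂, hε₃, hne, heq⟩ := hP.relation (k + 2) b (by omega) hk hb
  have hmul : g' (k + 2) b * ((1 + ε₃) * g' k (b + 1)) =
      (1 + ε₁) * g' (k + 1) b * g' (k + 1) (b + 1) - (1 + ε₂) := by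
    rw [heq]
    exact div_mul_cancel₀ _ hne
  have hid : (1 + ε₃) * friezeDefect g' k b =
      (ε₁ - ε₃) * (g' (k + 1) b * g' (k + 1) (b + 1)) + (ε₃ - ε₂) := by
    unfold friezeDefect
    linear_combination hmul
  have hxy : 0 ≤ v (g' (k + 1) b * g' (k + 1) (b + 1)) := by
    rw [v.map_mul]
    exact add_nonneg hx hy
  calc (N : WithTop ℤ)
      ≤ v ((ε₁ - ε₃) * (g' (k + 1) b * g' (k + 1) (b + 1)) + (ε₃ - ε₂)) := by
        refine v.map_le_add ?_ (v.map_le_sub hε₃ hε₂)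
        rw [mul_comm]
        exact v.le_map_mul_of_nonneg_left hxy (v.map_le_sub hε₁ hε₃)
    _ = v (friezeDefect g' k b) := by
        rw [← hid, v.map_mul, v.map_one_add_of_pos (hN.trans_le hε₃), zero_add]

theorem le_map_continuantDefect_zero (hP : IsPerturbation v n N g g') (hF : IsFrieze n c g)
    (hc : ∀ b < n, 0 ≤ v (c b)) (hN : (0 : WithTop ℤ) < N) {b : ℕ} (hb : b + 2 ≤ n) :
    (N : WithTop ℤ) ≤ v (continuantDefect c g' b 0) := by
  have hclose : ∀ a b', a ≤ 1 → a + b' ≤ n → (N : WithTop ℤ) ≤ v (g' a b' - g a b') :=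
    fun a b' ha hab => hP.le_map_sub_of_le_one hF hc ha (by omega) (by omega)
  have hu := hclose 0 (b + 1) (by omega) (by omega)
  have hu' := hclose 0 (b + 2) (by omega) (by omega)
  have hp := hclose 1 b le_rfl (by omega)
  rw [hF.zero (b + 1) (by omega)] at hu
  rw [hF.zero (b + 2) (by omega)] at hu'
  rw [hF.one b (by omega)] at hp
  have hint : ∀ b', b' + 1 ≤ n → 0 ≤ v (g' 1 b') := fun b' hb' =>
    v.map_nonneg_of_le_map_sub (hF.valuation_nonneg v hc 1 b' (by omega) (by omega)) hN.le
      (hclose 1 b' le_rfl (by omega))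
  have hid : g' 0 (b + 1) * continuantDefect c g' b 0 =
      friezeDefect g' 0 b + g' 1 (b + 1) * ((g' 1 b - c b) - c b * (g' 0 (b + 1) - 1)) +
        ((g' 0 (b + 1) - 1) + (g' 0 (b + 2) - 1) + (g' 0 (b + 1) - 1) * (g' 0 (b + 2) - 1)) := by
    unfold continuantDefect friezeDefect
    ring
  have hunit : v (g' 0 (b + 1)) = 0 := by
    rw [v.map_eq_of_lt_sub (x := 1) (by simpa using hN.trans_le hu), v.map_one]
  calc (N : WithTop ℤ)
      ≤ v (g' 0 (b + 1) * continuantDefect c g' b 0) := by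
        rw [hid]
        refine v.map_le_add (v.map_le_add ?_ ?_) (v.map_le_add (v.map_le_add hu hu') ?_)
        · exact hP.le_map_friezeDefect hN (k := 0) (by omega) (by omega) (hint b (by omega))
            (hint (b + 1) (by omega))
        · exact v.le_map_mul_of_nonneg_left (hint (b + 1) (by omega)) (v.map_le_sub hp
            (v.le_map_mul_of_nonneg_left (hc b (by omega)) hu))
        · exact v.le_map_mul_of_nonneg_left (hN.le.trans hu) hu'
    _ = v (continuantDefect c g' b 0) := by rw [v.map_mul, hunit, zero_add]

theorem le_map_casoratian_continuantDefect (hP : IsPerturbation v n N g g')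
    (hN : (0 : WithTop ℤ) < N) {m b : ℕ} (hm : m + 3 ≤ n) (hb : b ≤ n - (m + 3))
    (h₁ : 0 ≤ v (g' (m + 2) b)) (h₂ : 0 ≤ v (g' (m + 2) (b + 1)))
    (h₃ : 0 ≤ v (g' (m + 1) (b + 1))) (h₄ : 0 ≤ v (g' (m + 1) (b + 2))) :
    (N : WithTop ℤ) ≤ v (g' (m + 1) (b + 1) * continuantDefect c g' b (m + 1) -
      g' (m + 2) (b + 1) * continuantDefect c g' b m) := by
  rw [casoratian_continuantDefect]
  exact v.map_le_sub (hP.le_map_friezeDefect hN hm hb h₁ h₂)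
    (hP.le_map_friezeDefect hN (by omega) (by omega) h₃ h₄)

theorem le_map_sub_add_two (hP : IsPerturbation v n N g g') (hF : IsFrieze n c g)
    (hc : ∀ b < n, 0 ≤ v (c b)) (hN : (0 : WithTop ℤ) < N) {t r : WithTop ℤ} (ht : 0 < t)
    (hr0 : 0 ≤ r) (hr : r ≠ ⊤) (htr : t + r ≤ N) {k b : ℕ} (hk : k + 2 ≤ n)
    (hb : b ≤ n - (k + 2)) (hloss : PrecisionLossLE v g' (k + 2) b r)
    (hIH : ∀ a' b', a' < k + 2 → b ≤ b' → b' ≤ b + (k + 2 - a') →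
      t ≤ v (g' a' b' - g a' b')) :
    t ≤ v (g' (k + 2) b - g (k + 2) b) := by
  have hint : ∀ a' b', a' < k + 2 → b ≤ b' → b' ≤ b + (k + 2 - a') → 0 ≤ v (g' a' b') :=
    fun a' b' h₁ h₂ h₃ => v.map_nonneg_of_le_map_sub
      (hF.valuation_nonneg v hc a' b' (by omega) (by omega)) ht.le (hIH a' b' h₁ h₂ h₃)
  have hunit : ∀ a' b', a' < k + 2 → b ≤ b' → b' ≤ b + (k + 2 - a') →
      v (g a' b') = 0 → v (g' a' b') = 0 := fun a' b' h₁ h₂ h₃ hg =>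
    (v.map_eq_of_lt_sub (by rw [hg]; exact ht.trans_le (hIH a' b' h₁ h₂ h₃))).trans hg
  have hz : ∀ m < k, v (g' (m + 1) (b + 1)) ≤ r := fun m _ =>
    hloss (m + 3) b (by omega) (by omega)
  have hcas : ∀ m < k, (N : WithTop ℤ) ≤ v (g' (m + 1) (b + 1) *
      continuantDefect c g' b (m + 1) - g' (m + 2) (b + 1) * continuantDefect c g' b m) :=
    fun m _ => hP.le_map_casoratian_continuantDefect hN (by omega) (by omega)
      (hint _ _ (by omega) le_rfl (by omega)) (hint _ _ (by omega) (by omega) (by omega))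
      (hint _ _ (by omega) (by omega) (by omega)) (hint _ _ (by omega) (by omega) (by omega))
  have hpair : ∀ m, m + 1 < k → v (g' (m + 1) (b + 1)) + v (g' (m + 2) (b + 1)) ≤ r := by
    intro m hm
    rcases hF.valuation_eq_zero_or v hc (k := m + 1) (b := b) (by omega) (by omega) with h | h
    · rw [hunit _ _ (by omega) (by omega) (by omega) h, zero_add]
      exact hz (m + 1) hm
    · rw [hunit _ _ (by omega) (by omega) (by omega) h, add_zero]
      exact hz m (by omega)
  have hD : t ≤ v (continuantDefect c g' b k) :=
    v.le_map_of_le_map_casoratian (z := fun m => g' (m + 1) (b + 1)) hr0 hr htr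
      (hP.le_map_continuantDefect_zero hF hc hN (by omega)) hcas hz hpair
      (hint _ _ (by omega) (by omega) (by omega))
  have hid : g' (k + 2) b - g (k + 2) b = continuantDefect c g' b k +
      c b * (g' (k + 1) (b + 1) - g (k + 1) (b + 1)) - (g' k (b + 2) - g k (b + 2)) := by
    rw [hF.continuant hk hb, continuantDefect]
    ring
  rw [hid]
  exact v.map_le_sub (v.map_le_add hD (v.le_map_mul_of_nonneg_left (hc b (by omega))
    (hIH _ _ (by omega) (by omega) (by omega)))) (hIH _ _ (by omega) (by omega) (by omega))

theorem le_map_sub (hP : IsPerturbation v n N g g') (hF : IsFrieze n c g)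
    (hc : ∀ b < n, 0 ≤ v (c b)) {t r : WithTop ℤ} (ht : 0 < t) (hr0 : 0 ≤ r) (hr : r ≠ ⊤)
    (htr : t + r ≤ N) :
    ∀ a b, a ≤ n → b ≤ n - a → PrecisionLossLE v g' a b r → t ≤ v (g' a b - g a b) := by
  have htN : t ≤ N := (le_add_of_nonneg_right hr0).trans htr
  intro a
  induction a using Nat.strong_induction_on with
  | _ a IH =>
    intro b ha hb hloss
    by_cases ha1 : a ≤ 1
    · exact htN.trans (hP.le_map_sub_of_le_one hF hc ha1 ha hb)
    obtain ⟨k, rfl⟩ : ∃ k, a = k + 2 := ⟨a - 2, by omega⟩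
    exact hP.le_map_sub_add_two hF hc (ht.trans_le htN) ht hr0 hr htr ha hb hloss
      fun a' b' h₁ h₂ h₃ => IH a' h₁ b' (by omega) (by omega) (hloss.mono h₁ h₂ h₃)

end IsPerturbation

end Frieze

theorem stmt_19_general {K : Type*} [Field K] (v : AddValuation K (WithTop ℤ))
    (n : ℕ) (c : ℕ → K) (hc : ∀ b < n, 0 ≤ v (c b))
    (g : ℕ → ℕ → K)
    (h0 : ∀ b ≤ n, g 0 b = 1)
    (h1 : ∀ b ≤ n - 1, g 1 b = c b)
    (hrec : ∀ a b, 2 ≤ a → a ≤ n → b ≤ n - a →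
        g (a-2) (b+1) ≠ 0 ∧
        g a b = (g (a-1) b * g (a-1) (b+1) - 1) / g (a-2) (b+1))
    (N : ℕ)
    (g' : ℕ → ℕ → K)
    (hinit : ∀ a b, a ≤ 1 → a ≤ n → b ≤ n - a →
        ∃ ε : K, (N : WithTop ℤ) ≤ v ε ∧ g' a b = g a b * (1 + ε))
    (hpert : ∀ a b, 2 ≤ a → a ≤ n → b ≤ n - a →
        ∃ ε₁ ε₂ ε₃ : K,
          (N : WithTop ℤ) ≤ v ε₁ ∧ (N : WithTop ℤ) ≤ v ε₂ ∧
          (N : WithTop ℤ) ≤ v ε₃ ∧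
          (1 + ε₃) * g' (a-2) (b+1) ≠ 0 ∧
          g' a b = ((1 + ε₁) * g' (a-1) b * g' (a-1) (b+1) - (1 + ε₂)) /
                   ((1 + ε₃) * g' (a-2) (b+1))) :
    ∀ a b, a ≤ n → b ≤ n - a →
      ∀ r : ℤ, 0 ≤ r → r < (N : ℤ) →
        (∀ a' b', ((a' = a ∧ b' = b) ∨ (a' < a ∧ b ≤ b' ∧ b' ≤ b + (a - a'))) →
            2 ≤ a' → v (g' (a'-2) (b'+1)) ≤ (r : WithTop ℤ)) →
        (((N : ℤ) - r : ℤ) : WithTop ℤ) ≤ v (g' a b - g a b) ∧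
        0 ≤ v (g' a b) := by
  intro a b ha hb r hr0 hrN hloss
  have hF : IsFrieze n c g := ⟨h0, h1, hrec⟩
  have hP : IsPerturbation v n N g g' := ⟨hinit, hpert⟩
  have ht : (0 : WithTop ℤ) < ((N - r : ℤ) : WithTop ℤ) := by
    exact_mod_cast (by omega : 0 < N - r)
  have htr : ((N - r : ℤ) : WithTop ℤ) + (r : WithTop ℤ) ≤ N := by norm_cast; simp
  have hclose := hP.le_map_sub hF hc ht (by exact_mod_cast hr0) WithTop.coe_ne_top htr
    a b ha hb hloss
  exact ⟨hclose, v.map_nonneg_of_le_map_sub (hF.valuation_nonneg v hc a b ha hb) ht.le hclose⟩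

theorem stmt_19 {K : Type*} [Field K] (v : AddValuation K (WithTop ℤ))
    (n : ℕ) (hn : 0 < n) (c : ℕ → K) (hc : ∀ b < n, 0 ≤ v (c b))
    (g : ℕ → ℕ → K)
    (h0 : ∀ b ≤ n, g 0 b = 1)
    (h1 : ∀ b ≤ n - 1, g 1 b = c b)
    (hrec : ∀ a b, 2 ≤ a → a ≤ n → b ≤ n - a →
        g (a-2) (b+1) ≠ 0 ∧
        g a b = (g (a-1) b * g (a-1) (b+1) - 1) / g (a-2) (b+1))
    (N : ℕ) (hN : 0 < N)
    (g' : ℕ → ℕ → K)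
    (hinit : ∀ a b, a ≤ 1 → a ≤ n → b ≤ n - a →
        ∃ ε : K, (N : WithTop ℤ) ≤ v ε ∧ g' a b = g a b * (1 + ε))
    (hpert : ∀ a b, 2 ≤ a → a ≤ n → b ≤ n - a →
        ∃ ε₁ ε₂ ε₃ : K,
          (N : WithTop ℤ) ≤ v ε₁ ∧ (N : WithTop ℤ) ≤ v ε₂ ∧
          (N : WithTop ℤ) ≤ v ε₃ ∧
          (1 + ε₃) * g' (a-2) (b+1) ≠ 0 ∧
          g' a b = ((1 + ε₁) * g' (a-1) b * g' (a-1) (b+1) - (1 + ε₂)) /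
                   ((1 + ε₃) * g' (a-2) (b+1))) :
    ∀ a b, a ≤ n → b ≤ n - a →
      ∀ r : ℤ, 0 ≤ r → r < (N : ℤ) →
        (∀ a' b', ((a' = a ∧ b' = b) ∨ (a' < a ∧ b ≤ b' ∧ b' ≤ b + (a - a'))) →
            2 ≤ a' → v (g' (a'-2) (b'+1)) ≤ (r : WithTop ℤ)) →
        (((N : ℤ) - r : ℤ) : WithTop ℤ) ≤ v (g' a b - g a b) ∧
        0 ≤ v (g' a b) :=
  stmt_19_general v n c hc g h0 h1 hrec N g' hinit hpert
end
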